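/- Let l ≥ 1 and let m ≥ 1 be odd; work in R = F_2[x,y]/(x^l − 1, y^m − 1) with coefficient-vector identification R ≅ F_2^{lm}. Let c ∈ R satisfy c·χ = 0 where χ = Σ_{j=0}^{m−1} y^j, and let H ∈ F_2^{lm×2lm} be the matrix whose row indexed by a monomial α is the coefficient vector of (αc, αc^T) ∈ R ⊕ R. For i = 0,…,l−1 define the 2l vectors v_{U,i} = coefficient vector of (x^i χ, 0) and v_{D,i} = coefficient vector of (0, x^i χ) in F_2^{2lm}. Then: (i) H·v_{U,i} = 0 and H·v_{D,i} = 0 for all i (each such vector commutes with every X-check and, by self-duality, with every Z-check); (ii) the F_2 dot products satisfy v_{U,i}·v_{U,j} = δ_{ij}, v_{D,i}·v_{D,j} = δ_{ij}, and v_{U,i}·v_{D,j} = 0. Consequently the self-dual bivariate-bicycle code BB(c, c^T) encodes k = 2lm − 2·rank_{F_2}(H) ≥ 2l logical qubits, each of the 2l vectors represents a nontrivial logical operator of weight m, and the code distance satisfies d ≤ m. -/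

import Mathlib

open Matrix

/-- The check matrix of the self-dual bivariate-bicycle code `BB(c, cᵀ)` over
`R_{l,m} = F₂[x,y]/(xˡ-1, yᵐ-1) ≅ F₂^{ZMod l × ZMod m}`: the row indexed by the
monomial `α` is the coefficient vector of `(αc, αcᵀ)`, i.e. its entries are
`c(β - α)` on the left block and `cᵀ(β - α) = c(α - β)` on the right block. -/
def bbMat (l m : ℕ) (c : ZMod l × ZMod m → ZMod 2) :
    Matrix (ZMod l × ZMod m) ((ZMod l × ZMod m) ⊕ (ZMod l × ZMod m)) (ZMod 2) :=
  Matrix.of fun α => Sum.elim (fun β => c (β - α)) (fun β => c (α - β))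

/-- Coefficient vector of `(xⁱ χ, 0)` where `χ = Σ_{j<m} yʲ`. -/
def bbVU (l m : ℕ) (i : ZMod l) : ((ZMod l × ZMod m) ⊕ (ZMod l × ZMod m)) → ZMod 2 :=
  Sum.elim (fun β => if β.1 = i then 1 else 0) (fun _ => 0)

/-- Coefficient vector of `(0, xⁱ χ)` where `χ = Σ_{j<m} yʲ`. -/
def bbVD (l m : ℕ) (i : ZMod l) : ((ZMod l × ZMod m) ⊕ (ZMod l × ZMod m)) → ZMod 2 :=
  Sum.elim (fun _ => 0) (fun β => if β.1 = i then 1 else 0)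

/-!
The vectors `(xⁱχ, 0)` and `(0, xⁱχ)` lie in `ker H`: `c χ = 0` says that `c` sums to zero on
each fibre `{b | b.1 = k}`, hence so do all its translates and reflections. Their coefficient
vectors have disjoint supports of odd size `m`, so they are orthonormal over `F₂`.
Self-duality means `H Hᵀ = 0`: the row space of `H` sits inside `ker H`, and every row is
orthogonal to every kernel vector. An orthonormal family in `ker H` therefore meets the row space
trivially, so no member is a stabilizer, and `rank H + 2l ≤ dim ker H = 2lm - rank H`.
-/

section SelfOrthogonal

variable {K ι κ σ : Type*} [Fintype ι] [Fintype κ] [Fintype σ] [DecidableEq σ]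
  {b : σ → κ → K}

section CommRing

variable [CommRing K] {H : Matrix ι κ K}

theorem sum_smul_dotProduct_of_orthonormal
    (hb : ∀ s t, b s ⬝ᵥ b t = if s = t then 1 else 0) (g : σ → K) (t : σ) :
    (∑ s, g s • b s) ⬝ᵥ b t = g t := by
  simp [sum_dotProduct, smul_dotProduct, hb]

theorem linearIndependent_of_orthonormal
    (hb : ∀ s t, b s ⬝ᵥ b t = if s = t then 1 else 0) : LinearIndependent K b :=
  Fintype.linearIndependent_iff.mpr fun g hg t => by
    rw [← sum_smul_dotProduct_of_orthonormal hb g t, hg, zero_dotProduct]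

theorem vecMul_dotProduct_eq_zero {v : κ → K} (hv : H *ᵥ v = 0) (u : ι → K) :
    (u ᵥ* H) ⬝ᵥ v = 0 := by
  rw [← dotProduct_mulVec, hv, dotProduct_zero]

theorem not_exists_vecMul_eq {v : κ → K} (hv : H *ᵥ v = 0) (hvv : v ⬝ᵥ v ≠ 0) :
    ¬ ∃ u, u ᵥ* H = v := by
  rintro ⟨u, rfl⟩
  exact hvv (vecMul_dotProduct_eq_zero hv u)

end CommRing

theorem card_le_card_sub_two_mul_rank [Field K] {H : Matrix ι κ K} (hHH : H * Hᵀ = 0)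
    (hker : ∀ s, H *ᵥ b s = 0) (hb : ∀ s t, b s ⬝ᵥ b t = if s = t then 1 else 0) :
    Fintype.card σ ≤ Fintype.card κ - 2 * H.rank := by
  let rowSpace := LinearMap.range Hᵀ.mulVecLin
  let W := Submodule.span K (Set.range b)
  have hrow : Module.finrank K rowSpace = H.rank := H.rank_transpose
  have hW : Module.finrank K W = Fintype.card σ :=
    finrank_span_eq_card (linearIndependent_of_orthonormal hb)
  have hrow_le : rowSpace ≤ LinearMap.ker H.mulVecLin := by
    rintro _ ⟨u, rfl⟩
    rw [LinearMap.mem_ker, mulVecLin_apply, mulVecLin_apply, mulVec_mulVec, hHH, zero_mulVec]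
  have hW_le : W ≤ LinearMap.ker H.mulVecLin :=
    Submodule.span_le.mpr (Set.range_subset_iff.mpr hker)
  have hdisj : rowSpace ⊓ W = ⊥ := by
    refine eq_bot_iff.mpr fun v ⟨⟨u, hu⟩, hvW⟩ => ?_
    obtain ⟨g, rfl⟩ := (Submodule.mem_span_range_iff_exists_fun K).mp hvW
    have hg : ∀ t, g t = 0 := fun t => by
      rw [← sum_smul_dotProduct_of_orthonormal hb g t, ← hu, mulVecLin_apply, mulVec_transpose]
      exact vecMul_dotProduct_eq_zero (hker t) u
    simp [hg]
  have hsup := Submodule.finrank_sup_add_finrank_inf_eq rowSpace W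
  rw [hdisj, finrank_bot, hrow, hW] at hsup
  have hle := Submodule.finrank_mono (sup_le hrow_le hW_le)
  have hnullity := LinearMap.finrank_range_add_finrank_ker H.mulVecLin
  rw [Module.finrank_fintype_fun_eq_card] at hnullity
  change H.rank + _ = _ at hnullity
  omega

end SelfOrthogonal

section FstIndicator

variable {G G' : Type*} [DecidableEq G]

def fstIndicator (R : Type*) [Zero R] [One R] (i : G) : G × G' → R :=
  fun β => if β.1 = i then 1 else 0

variable {R : Type*} [CommRing R] [Fintype G] [Fintype G']

theorem fstIndicator_dotProduct_fstIndicator (i j : G) :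
    fstIndicator R i ⬝ᵥ (fstIndicator R j : G × G' → R) =
      if i = j then (Fintype.card G' : R) else 0 := by
  by_cases hij : i = j
  · subst hij
    simp [fstIndicator, dotProduct, Fintype.sum_prod_type]
  · simp [fstIndicator, dotProduct, Fintype.sum_prod_type, hij, Ne.symm hij]

theorem hammingNorm_fstIndicator [Nontrivial R] [DecidableEq R] (i : G) :
    hammingNorm (fstIndicator R i : G × G' → R) = Fintype.card G' := by
  simp only [hammingNorm, fstIndicator, ne_eq, ite_eq_right_iff, one_ne_zero, imp_false, not_not]
  rw [Finset.card_filter, Fintype.sum_prod_type]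
  simp [apply_ite Finset.card]

end FstIndicator

section Circulant

variable {R G G' : Type*} [CommRing R] [AddCommGroup G] [Fintype G]

theorem fromCols_circulant_mul_transpose [CharP R 2] (c : G → R) :
    fromCols (circulant c)ᵀ (circulant c) * (fromCols (circulant c)ᵀ (circulant c))ᵀ = 0 := by
  rw [transpose_fromCols, fromCols_mul_fromRows, transpose_transpose, transpose_circulant,
    circulant_mul_comm]
  ext
  exact CharTwo.add_self_eq_zero _

variable [AddCommGroup G'] [Fintype G'] [DecidableEq G] {c : G × G' → R}

theorem circulant_mulVec_fstIndicator (hc : ∀ k, ∑ b, (if b.1 = k then c b else 0) = 0)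
    (i : G) : circulant c *ᵥ fstIndicator R i = 0 := by
  funext α
  rw [Pi.zero_apply, ← hc (α.1 - i)]
  refine Fintype.sum_equiv (Equiv.subLeft α) _ _ fun β => ?_
  simp only [fstIndicator, circulant_apply, Equiv.subLeft_apply, Prod.fst_sub, sub_right_inj,
    mul_boole, eq_comm]

theorem fstIndicator_vecMul_circulant (hc : ∀ k, ∑ b, (if b.1 = k then c b else 0) = 0)
    (i : G) : fstIndicator R i ᵥ* circulant c = 0 := by
  funext β
  rw [Pi.zero_apply, ← hc (i - β.1)]
  refine Fintype.sum_equiv (Equiv.subRight β) _ _ fun α => ?_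
  simp only [fstIndicator, circulant_apply, Equiv.subRight_apply, Prod.fst_sub, sub_left_inj,
    boole_mul]

end Circulant

theorem hammingNorm_sumElim {ι κ R : Type*} [Fintype ι] [Fintype κ] [Zero R] [DecidableEq R]
    (f : ι → R) (g : κ → R) : hammingNorm (Sum.elim f g) = hammingNorm f + hammingNorm g := by
  simp only [hammingNorm, Finset.card_filter, Fintype.sum_sum_type, Sum.elim_inl, Sum.elim_inr]
  rfl

section BivariateBicycle

variable {l m : ℕ}

theorem bbMat_eq_fromCols (c : ZMod l × ZMod m → ZMod 2) :
    bbMat l m c = fromCols (circulant c)ᵀ (circulant c) := rfl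

theorem bbVU_eq_sumElim (i : ZMod l) :
    bbVU l m i = Sum.elim (fstIndicator (ZMod 2) i) (0 : ZMod l × ZMod m → ZMod 2) := rfl

theorem bbVD_eq_sumElim (i : ZMod l) :
    bbVD l m i = Sum.elim (0 : ZMod l × ZMod m → ZMod 2) (fstIndicator (ZMod 2) i) := rfl

end BivariateBicycle

theorem stmt_11_general (l m : ℕ) [NeZero l] [NeZero m] (hm : Odd m)
    (c : ZMod l × ZMod m → ZMod 2)
    (hc : ∀ a : ZMod l × ZMod m,
      (∑ b : ZMod l × ZMod m, c b * (if (a - b).1 = 0 then (1 : ZMod 2) else 0)) = 0) :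
    (∀ i : ZMod l,
        (bbMat l m c).mulVec (bbVU l m i) = 0 ∧ (bbMat l m c).mulVec (bbVD l m i) = 0) ∧
    (∀ i j : ZMod l,
        (∑ q, bbVU l m i q * bbVU l m j q) = (if i = j then 1 else 0) ∧
        (∑ q, bbVD l m i q * bbVD l m j q) = (if i = j then 1 else 0) ∧
        (∑ q, bbVU l m i q * bbVD l m j q) = 0) ∧
    2 * l ≤ 2 * (l * m) - 2 * (bbMat l m c).rank ∧
    (∀ i : ZMod l,
        hammingNorm (bbVU l m i) = m ∧ hammingNorm (bbVD l m i) = m ∧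
        (¬ ∃ u, Matrix.vecMul u (bbMat l m c) = bbVU l m i) ∧
        (¬ ∃ u, Matrix.vecMul u (bbMat l m c) = bbVD l m i)) ∧
    sInf {w | ∃ v : ((ZMod l × ZMod m) ⊕ (ZMod l × ZMod m)) → ZMod 2,
        (bbMat l m c).mulVec v = 0 ∧
        (¬ ∃ u, Matrix.vecMul u (bbMat l m c) = v) ∧ hammingNorm v = w} ≤ m := by
  have hfibre : ∀ k, ∑ b, (if b.1 = k then c b else 0) = 0 := fun k => by
    simpa [sub_eq_zero, eq_comm] using hc (k, 0)
  let b : ZMod l ⊕ ZMod l → (ZMod l × ZMod m) ⊕ (ZMod l × ZMod m) → ZMod 2 :=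
    Sum.elim (bbVU l m) (bbVD l m)
  have hker : ∀ s, bbMat l m c *ᵥ b s = 0 := by
    rintro (i | i) <;>
      simp [b, bbMat_eq_fromCols, bbVU_eq_sumElim, bbVD_eq_sumElim, mulVec_transpose,
        fstIndicator_vecMul_circulant hfibre, circulant_mulVec_fstIndicator hfibre]
  have hm2 : (m : ZMod 2) = 1 := ZMod.natCast_eq_one_iff_odd.mpr hm
  have horth : ∀ s t, b s ⬝ᵥ b t = if s = t then 1 else 0 := by
    rintro (i | i) (j | j) <;>
      simp [b, bbVU_eq_sumElim, bbVD_eq_sumElim, sumElim_dotProduct_sumElim,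
        fstIndicator_dotProduct_fstIndicator, hm2]
  have hnorm : ∀ s, hammingNorm (b s) = m := by
    rintro (i | i) <;>
      simp [b, bbVU_eq_sumElim, bbVD_eq_sumElim, hammingNorm_sumElim, hammingNorm_fstIndicator]
  have hlogical : ∀ s, ¬ ∃ u, u ᵥ* bbMat l m c = b s := fun s =>
    not_exists_vecMul_eq (hker s) (by simp [horth])
  have hrank := card_le_card_sub_two_mul_rank (fromCols_circulant_mul_transpose c) hker horth
  rw [← bbMat_eq_fromCols] at hrank
  simp only [Fintype.card_sum, ZMod.card, Fintype.card_prod] at hrank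
  refine ⟨fun i => ⟨hker (.inl i), hker (.inr i)⟩,
    fun i j => ⟨(horth (.inl i) (.inl j)).trans (by simp),
      (horth (.inr i) (.inr j)).trans (by simp), horth (.inl i) (.inr j)⟩,
    by omega,
    fun i => ⟨hnorm (.inl i), hnorm (.inr i), hlogical (.inl i), hlogical (.inr i)⟩,
    Nat.sInf_le ⟨b (.inl 0), hker _, hlogical _, hnorm _⟩⟩

/-- **Disjoint logical basis of self-dual BB codes.**
Let `l ≥ 1`, `m ≥ 1` odd, and `c ∈ R_{l,m}` with `c·χ = 0` for `χ = Σ_j yʲ`.  Then the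
`2l` coefficient vectors of `(xⁱχ, 0)` and `(0, xⁱχ)`: (i) are annihilated by the check
matrix `H` of `BB(c, cᵀ)`; (ii) are pairwise orthogonal with unit self inner products
(`δ_{ij}` pattern); consequently the code encodes `k = 2lm - 2·rank H ≥ 2l` logical
qubits, each of the `2l` vectors is a nontrivial logical operator of weight `m`, and the
code distance is at most `m`. -/
theorem stmt_11 (l m : ℕ) [NeZero l] [NeZero m] (hl : 1 ≤ l) (hm : Odd m)
    (c : ZMod l × ZMod m → ZMod 2)
    (hc : ∀ a : ZMod l × ZMod m,
      (∑ b : ZMod l × ZMod m, c b * (if (a - b).1 = 0 then (1 : ZMod 2) else 0)) = 0) :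
    (∀ i : ZMod l,
        (bbMat l m c).mulVec (bbVU l m i) = 0 ∧ (bbMat l m c).mulVec (bbVD l m i) = 0) ∧
    (∀ i j : ZMod l,
        (∑ q, bbVU l m i q * bbVU l m j q) = (if i = j then 1 else 0) ∧
        (∑ q, bbVD l m i q * bbVD l m j q) = (if i = j then 1 else 0) ∧
        (∑ q, bbVU l m i q * bbVD l m j q) = 0) ∧
    2 * l ≤ 2 * (l * m) - 2 * (bbMat l m c).rank ∧
    (∀ i : ZMod l,
        hammingNorm (bbVU l m i) = m ∧ hammingNorm (bbVD l m i) = m ∧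
        (¬ ∃ u, Matrix.vecMul u (bbMat l m c) = bbVU l m i) ∧
        (¬ ∃ u, Matrix.vecMul u (bbMat l m c) = bbVD l m i)) ∧
    sInf {w | ∃ v : ((ZMod l × ZMod m) ⊕ (ZMod l × ZMod m)) → ZMod 2,
        (bbMat l m c).mulVec v = 0 ∧
        (¬ ∃ u, Matrix.vecMul u (bbMat l m c) = v) ∧ hammingNorm v = w} ≤ m :=
  stmt_11_general l m hm c hc
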